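/- Let k ≥ 1 and let s and s' be any two barred states each having a k-fuse. Then for every finite sequence (j_1,…,j_m) of positive integers with j_t ≤ k for all t: the sequence is playable from s if and only if it is playable from s'. (In particular, the tree of plays using only positions 1,…,k from a state with a k-fuse depends only on k, not on the particular state.) -/

import Mathlib

/-- A barred state: a sequence `μ` of natural numbers indexed by the positive
integers (the value at `0` is irrelevant) together with a set `S` of barred
positions, all positive and with `μ_j ≠ 0` for `j ∈ S`. -/
structure BarredState where
  mu : ℕ → ℕ
  bars : Set ℕ
  bars_pos : ∀ j ∈ bars, 1 ≤ j
  bars_ne : ∀ j ∈ bars, mu j ≠ 0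

/-- The sequence obtained from `μ` by the move `R_j`:
`μ'_i = μ_i` for `i < j-1`, `μ'_{j-1} = μ_{j-1} + μ_j`, and `μ'_i = μ_{i+1}` for `i ≥ j`. -/
def moveMu (mu : ℕ → ℕ) (j : ℕ) : ℕ → ℕ := fun i =>
  if i < j - 1 then mu i
  else if i = j - 1 then mu (j - 1) + mu j
  else mu (i + 1)

/-- The move `R_j` on barred states: the new barred set is
`{i : 1 ≤ i ≤ j-1, μ'_i ≠ 0} ∪ {i ≥ j : μ'_i ≠ 0 and μ_j + ⋯ + μ_i < 3}`. -/
def BarredState.move (s : BarredState) (j : ℕ) : BarredState where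
  mu := moveMu s.mu j
  bars :=
    {i | 1 ≤ i ∧ i ≤ j - 1 ∧ moveMu s.mu j i ≠ 0} ∪
    {i | 1 ≤ i ∧ j ≤ i ∧ moveMu s.mu j i ≠ 0 ∧ (∑ t ∈ Finset.Icc j i, s.mu t) < 3}
  bars_pos := by
    rintro i (⟨h, -, -⟩ | ⟨h, -, -, -⟩) <;> exact h
  bars_ne := by
    rintro i (⟨-, -, h⟩ | ⟨-, -, h, -⟩) <;> exact h

/-- A finite sequence `(j_1, …, j_m)` is playable from `s` if `j_1` is barred in `s`
and `(j_2, …, j_m)` is playable from `R_{j_1}(s)`. -/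
def PlayableSeq : BarredState → List ℕ → Prop
  | _, [] => True
  | s, j :: js => j ∈ s.bars ∧ PlayableSeq (s.move j) js

/-- The state obtained by playing a sequence of moves. -/
def playAll : BarredState → List ℕ → BarredState
  | s, [] => s
  | s, j :: js => playAll (s.move j) js

/-- `(f_1, …, f_k)` is a `k`-fuse prefix: `f_i ∈ {1,2}` for `1 ≤ i ≤ k-1`, `f_k ≥ 3`,
and no two consecutive entries equal `1`. -/
def IsFusePrefix (k : ℕ) (f : ℕ → ℕ) : Prop :=
  (∀ i, 1 ≤ i → i ≤ k - 1 → f i = 1 ∨ f i = 2) ∧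
  3 ≤ f k ∧
  (∀ i, 1 ≤ i → i ≤ k - 1 → ¬(f i = 1 ∧ f (i + 1) = 1))

/-- A barred state has a `k`-fuse if `(μ_1, …, μ_k)` is a `k`-fuse prefix and
positions `1, …, k` are all barred. -/
def HasFuse (k : ℕ) (s : BarredState) : Prop :=
  IsFusePrefix k s.mu ∧ ∀ i, 1 ≤ i → i ≤ k → i ∈ s.bars

/-!
As far as moves in positions `1, …, K` are concerned, a state carrying a fuse is summarised by
a profile: the end `p` of the fuse, the number `b` of barred positions (exactly `1, …, b`),
and which of `μ_1, …, μ_p` are small (`< 3`). Inside a fuse consecutive entries sum to at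
least `3`, so after a move `R_j` with `j ≤ b` the merged entry `μ_{j-1} + μ_j` is big, every
partial sum `μ_j + ⋯ + μ_i` with `i > j` is at least `3`, and the new barred positions are
`1, …, j - 1` together with `j` exactly when `μ_j` is small. Hence the profile after the move
is a function of the old profile and `j` alone, and all states with a `k`-fuse start from the
same profile.
-/

theorem moveMu_of_lt {mu : ℕ → ℕ} {j i : ℕ} (h : i < j - 1) : moveMu mu j i = mu i := by
  simp [moveMu, h]

theorem moveMu_pred (mu : ℕ → ℕ) (j : ℕ) : moveMu mu j (j - 1) = mu (j - 1) + mu j := by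
  simp [moveMu]

theorem moveMu_of_le {mu : ℕ → ℕ} {j i : ℕ} (hj : 1 ≤ j) (h : j ≤ i) :
    moveMu mu j i = mu (i + 1) := by
  simp [moveMu, show ¬i < j - 1 by omega, show i ≠ j - 1 by omega]

structure IsFuseSeq (mu : ℕ → ℕ) (p : ℕ) : Prop where
  ne_zero : ∀ i, 1 ≤ i → i ≤ p → mu i ≠ 0
  three_le_add_succ : ∀ i, 1 ≤ i → i + 1 ≤ p → 3 ≤ mu i + mu (i + 1)
  three_le_last : 3 ≤ mu p

namespace IsFuseSeq

variable {mu : ℕ → ℕ} {p j : ℕ}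

theorem lt_of_lt_three (h : IsFuseSeq mu p) (hjp : j ≤ p) (hj : mu j < 3) : j < p := by
  rcases hjp.lt_or_eq with hlt | rfl
  · exact hlt
  · exact absurd h.three_le_last (by omega)

theorem three_le_sum_Icc (h : IsFuseSeq mu p) (hj : 1 ≤ j) (hjp : j ≤ p) {i : ℕ} (hji : j < i) :
    3 ≤ ∑ t ∈ Finset.Icc j i, mu t := by
  rcases hjp.lt_or_eq with hjp | rfl
  · calc 3 ≤ mu j + mu (j + 1) := h.three_le_add_succ j hj hjp
      _ = ∑ t ∈ {j, j + 1}, mu t := (Finset.sum_pair (by omega)).symm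
      _ ≤ ∑ t ∈ Finset.Icc j i, mu t := Finset.sum_le_sum_of_subset (by
          intro t; simp only [Finset.mem_insert, Finset.mem_singleton, Finset.mem_Icc]; omega)
  · exact h.three_le_last.trans
      (Finset.single_le_sum_of_canonicallyOrdered (Finset.mem_Icc.2 ⟨le_rfl, hji.le⟩))

theorem move (h : IsFuseSeq mu p) (hj : 1 ≤ j) (hjp : j ≤ p) :
    IsFuseSeq (moveMu mu j) (p - 1) where
  ne_zero i hi hip := by
    rcases lt_trichotomy i (j - 1) with hlt | rfl | hgt
    · rw [moveMu_of_lt hlt]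
      exact h.ne_zero i hi (by omega)
    · rw [moveMu_pred]
      have := h.ne_zero j hj hjp
      omega
    · rw [moveMu_of_le hj (by omega)]
      exact h.ne_zero (i + 1) (by omega) (by omega)
  three_le_add_succ i hi hip := by
    rcases lt_trichotomy (i + 1) (j - 1) with hlt | heq | hgt
    · rw [moveMu_of_lt (by omega), moveMu_of_lt hlt]
      exact h.three_le_add_succ i hi (by omega)
    · rw [moveMu_of_lt (by omega), heq, moveMu_pred]
      have := h.three_le_add_succ i hi (by omega)
      rw [show i + 1 = j - 1 by omega] at this
      omega
    · rcases (Nat.lt_succ_iff.1 hgt).lt_or_eq with hlt | heq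
      · rw [moveMu_of_le hj (by omega), moveMu_of_le hj (by omega)]
        exact h.three_le_add_succ (i + 1) (by omega) (by omega)
      · rw [show i = j - 1 by omega, moveMu_pred, moveMu_of_le hj (by omega),
          show j - 1 + 1 + 1 = j + 1 by omega]
        have := h.three_le_add_succ j hj (by omega)
        omega
  three_le_last := by
    rcases hjp.lt_or_eq with hlt | rfl
    · rw [moveMu_of_le hj (by omega), Nat.sub_add_cancel (by omega)]
      exact h.three_le_last
    · rw [moveMu_pred]
      have := h.three_le_last
      omega

theorem moveMu_lt_three_iff (h : IsFuseSeq mu p) (hj : 1 ≤ j) (hjp : j ≤ p) {i : ℕ}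
    (hi : 1 ≤ i) (hip : i ≤ p - 1) :
    moveMu mu j i < 3 ↔ (i + 1 < j ∧ mu i < 3) ∨ (j ≤ i ∧ mu (i + 1) < 3) := by
  rcases lt_trichotomy i (j - 1) with hlt | rfl | hgt
  · rw [moveMu_of_lt hlt]
    omega
  · rw [moveMu_pred]
    have := h.three_le_add_succ (j - 1) hi (by omega)
    rw [Nat.sub_add_cancel hj] at this
    omega
  · rw [moveMu_of_le hj (by omega)]
    omega

theorem mem_move_bars_iff {s : BarredState} (h : IsFuseSeq s.mu p) (hj : 1 ≤ j) (hjp : j ≤ p)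
    {i : ℕ} (hi : 1 ≤ i) : i ∈ (s.move j).bars ↔ i < j ∨ (i = j ∧ s.mu j < 3) := by
  have hne : i < j → moveMu s.mu j i ≠ 0 := fun hij => (h.move hj hjp).ne_zero i hi (by omega)
  simp only [BarredState.move, Set.mem_union, Set.mem_ofPred_eq]
  constructor
  · rintro (⟨-, hij, -⟩ | ⟨-, hji, -, hsum⟩)
    · omega
    · rcases hji.lt_or_eq with hlt | rfl
      · exact absurd hsum (not_lt.2 (h.three_le_sum_Icc hj hjp hlt))
      · rw [Finset.Icc_self, Finset.sum_singleton] at hsum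
        exact Or.inr ⟨rfl, hsum⟩
  · rintro (hij | ⟨rfl, hsmall⟩)
    · exact Or.inl ⟨hi, by omega, hne hij⟩
    · have hip : i < p := h.lt_of_lt_three hjp hsmall
      refine Or.inr ⟨hi, le_rfl, ?_, by rwa [Finset.Icc_self, Finset.sum_singleton]⟩
      rw [moveMu_of_le hj le_rfl]
      exact h.ne_zero (i + 1) (by omega) hip

end IsFuseSeq

namespace IsFusePrefix

variable {k : ℕ} {f : ℕ → ℕ}

theorem isFuseSeq (h : IsFusePrefix k f) : IsFuseSeq f k where
  ne_zero i hi hik := by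
    rcases hik.lt_or_eq with hlt | rfl
    · rcases h.1 i hi (by omega) with h1 | h2 <;> omega
    · have := h.2.1
      omega
  three_le_add_succ i hi hik := by
    rcases Nat.lt_or_ge (i + 1) k with hlt | hge
    · have := h.2.2 i hi (by omega)
      rcases h.1 i hi (by omega) with _ | _ <;>
        rcases h.1 (i + 1) (by omega) (by omega) with _ | _ <;> omega
    · rw [show i + 1 = k by omega]
      have := h.2.1
      omega
  three_le_last := h.2.1

theorem lt_three_iff (h : IsFusePrefix k f) {i : ℕ} (hi : 1 ≤ i) (hik : i ≤ k) :
    f i < 3 ↔ i < k := by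
  rcases hik.lt_or_eq with hlt | rfl
  · rcases h.1 i hi (by omega) with h1 | h2 <;> omega
  · have := h.2.1
    omega

end IsFusePrefix

structure FuseProfile where
  fuseEnd : ℕ
  barEnd : ℕ
  small : ℕ → Bool

namespace FuseProfile

def next (d : FuseProfile) (j : ℕ) : FuseProfile where
  fuseEnd := d.fuseEnd - 1
  barEnd := if d.small j then j else j - 1
  small i := (decide (i + 1 < j) && d.small i) || (decide (j ≤ i) && d.small (i + 1))

def ofFuse (k : ℕ) : FuseProfile :=
  ⟨k, k, fun i => decide (i < k)⟩

/-- Once no position `≤ K` is barred no further move is playable and the fuse may have burnt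
down completely, so the fuse conditions are only imposed while `barEnd ≥ 1`. -/
structure Describes (K : ℕ) (d : FuseProfile) (s : BarredState) : Prop where
  mem_bars_iff : ∀ i, 1 ≤ i → i ≤ K → (i ∈ s.bars ↔ i ≤ d.barEnd)
  barEnd_le : 1 ≤ d.barEnd → d.barEnd ≤ d.fuseEnd
  isFuseSeq : 1 ≤ d.barEnd → IsFuseSeq s.mu d.fuseEnd
  small_iff : 1 ≤ d.barEnd → ∀ i, 1 ≤ i → i ≤ d.fuseEnd → (d.small i ↔ s.mu i < 3)

variable {K : ℕ} {d : FuseProfile} {s : BarredState}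

theorem Describes.move (h : d.Describes K s) {j : ℕ} (hj : 1 ≤ j) (hjb : j ≤ d.barEnd) :
    (d.next j).Describes K (s.move j) := by
  have hb : 1 ≤ d.barEnd := hj.trans hjb
  have hjp : j ≤ d.fuseEnd := hjb.trans (h.barEnd_le hb)
  have hf := h.isFuseSeq hb
  have hsmall_j := h.small_iff hb j hj hjp
  have hbarEnd : (d.next j).barEnd = if s.mu j < 3 then j else j - 1 := by
    simp only [next, hsmall_j]
  refine ⟨fun i hi _ => ?_, fun _ => ?_, fun _ => hf.move hj hjp, fun _ i hi hip => ?_⟩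
  · rw [hf.mem_move_bars_iff hj hjp hi, hbarEnd]
    split_ifs <;> omega
  · rw [hbarEnd]
    split_ifs with hlt
    · exact Nat.le_sub_one_of_lt (hf.lt_of_lt_three hjp hlt)
    · exact Nat.sub_le_sub_right hjp 1
  · change i ≤ d.fuseEnd - 1 at hip
    change _ ↔ moveMu s.mu j i < 3
    rw [hf.moveMu_lt_three_iff hj hjp hi hip, ← h.small_iff hb i hi (by omega),
      ← h.small_iff hb (i + 1) (by omega) (by omega)]
    simp only [next, Bool.or_eq_true, Bool.and_eq_true, decide_eq_true_eq]

theorem playableSeq_iff_of_describes {s' : BarredState} {js : List ℕ}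
    (hjs : ∀ j ∈ js, 1 ≤ j ∧ j ≤ K) (hs : d.Describes K s) (hs' : d.Describes K s') :
    PlayableSeq s js ↔ PlayableSeq s' js := by
  induction js generalizing d s s' with
  | nil => exact Iff.rfl
  | cons j js ih =>
    obtain ⟨hj, hjK⟩ := hjs j List.mem_cons_self
    have hjs' : ∀ i ∈ js, 1 ≤ i ∧ i ≤ K := fun i hi => hjs i (List.mem_cons_of_mem j hi)
    simp only [PlayableSeq, hs.mem_bars_iff j hj hjK, hs'.mem_bars_iff j hj hjK]
    by_cases hjb : j ≤ d.barEnd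
    · simp only [hjb, true_and]
      exact ih hjs' (hs.move hj hjb) (hs'.move hj hjb)
    · simp only [hjb, false_and]

end FuseProfile

theorem HasFuse.describes {k : ℕ} {s : BarredState} (h : HasFuse k s) :
    (FuseProfile.ofFuse k).Describes k s where
  mem_bars_iff i hi hik := iff_of_true (h.2 i hi hik) hik
  barEnd_le _ := le_rfl
  isFuseSeq _ := h.1.isFuseSeq
  small_iff _ i hi hik := by
    simp only [FuseProfile.ofFuse, decide_eq_true_eq, h.1.lt_three_iff hi hik]

theorem stmt9_general (k : ℕ) (s s' : BarredState)
    (hs : HasFuse k s) (hs' : HasFuse k s') :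
    ∀ js : List ℕ, (∀ j ∈ js, 1 ≤ j ∧ j ≤ k) →
      (PlayableSeq s js ↔ PlayableSeq s' js) :=
  fun _ hjs => FuseProfile.playableSeq_iff_of_describes hjs hs.describes hs'.describes

/-- If `s` and `s'` both have a `k`-fuse, then exactly the same sequences of moves
in positions `1, …, k` are playable from `s` and from `s'`: the fuse tree depends
only on `k`. -/
theorem stmt9 (k : ℕ) (hk : 1 ≤ k) (s s' : BarredState)
    (hs : HasFuse k s) (hs' : HasFuse k s') :
    ∀ js : List ℕ, (∀ j ∈ js, 1 ≤ j ∧ j ≤ k) →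
      (PlayableSeq s js ↔ PlayableSeq s' js) :=
  stmt9_general k s s' hs hs'
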